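/- arXiv:2410.23621 — 4 statements merged into one kernel-verified Lean document; each statement's English description precedes it below -/
import Mathlib

section
/- Let R be a simply connected region in the square lattice, let x and y be points of V(R) at Euclidean distance 1 joined by a lattice edge of R, and let x′ ∈ V(R). If there exists a geodesic path from x′ to x all of whose points lie in V(R) and which contains no point of ∂R other than possibly x′, then there exists a geodesic path from x′ to y all of whose points lie in V(R). -/
/-- The closed unit square with lower-left corner `s`, as a subset of `ℝ × ℝ`. -/
def unitSq (s : ℤ × ℤ) : Set (ℝ × ℝ) :=
  Set.Icc (s.1 : ℝ) (s.1 + 1) ×ˢ Set.Icc (s.2 : ℝ) (s.2 + 1)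

/-- The union of the closed unit squares of a region `R`. -/
def regionSpace (R : Finset (ℤ × ℤ)) : Set (ℝ × ℝ) := ⋃ s ∈ R, unitSq s

/-- The embedding of a lattice point into the plane. -/
def embPt (x : ℤ × ℤ) : ℝ × ℝ := ((x.1 : ℝ), (x.2 : ℝ))

/-- The four corners of the unit square with lower-left corner `s`. -/
def sqCorners (s : ℤ × ℤ) : Set (ℤ × ℤ) :=
  {s, (s.1 + 1, s.2), (s.1, s.2 + 1), (s.1 + 1, s.2 + 1)}

/-- `V R` : the lattice points that are corners of squares of `R`. -/
def V (R : Finset (ℤ × ℤ)) : Set (ℤ × ℤ) := {x | ∃ s ∈ R, x ∈ sqCorners s}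

/-- `bdry R` : lattice points lying on the topological boundary of the region. -/
def bdry (R : Finset (ℤ × ℤ)) : Set (ℤ × ℤ) := {x | embPt x ∈ frontier (regionSpace R)}

/-- The square with lower-left corner `s` is white when `s.1 + s.2` is even. -/
def White (s : ℤ × ℤ) : Prop := Even (s.1 + s.2)

/-- A domino: a pair of unit squares sharing a side. -/
def IsDomino (d : Finset (ℤ × ℤ)) : Prop :=
  ∃ s t : ℤ × ℤ, d = {s, t} ∧ (t - s = (1, 0) ∨ t - s = (0, 1))

/-- A domino tiling of `R` : a partition of the squares of `R` into dominoes. -/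
def IsDominoTiling (R : Finset (ℤ × ℤ)) (T : Finset (Finset (ℤ × ℤ))) : Prop :=
  (∀ d ∈ T, IsDomino d ∧ ∀ s ∈ d, s ∈ R) ∧ ∀ s ∈ R, ∃! d, d ∈ T ∧ s ∈ d

/-- The four unit steps in the square lattice. -/
def unitSteps : Set (ℤ × ℤ) := {(1, 0), (-1, 0), (0, 1), (0, -1)}

/-- A directed lattice edge of `R`. -/
def DirectedEdge (R : Finset (ℤ × ℤ)) (x y : ℤ × ℤ) : Prop :=
  x ∈ V R ∧ y ∈ V R ∧ y - x ∈ unitSteps ∧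
    segment ℝ (embPt x) (embPt y) ⊆ regionSpace R

/-- A directed lattice edge of `R` lying on the boundary `∂R`. -/
def BoundaryEdge (R : Finset (ℤ × ℤ)) (x y : ℤ × ℤ) : Prop :=
  DirectedEdge R x y ∧ segment ℝ (embPt x) (embPt y) ⊆ frontier (regionSpace R)

/-- The union of the closed squares of a domino. -/
def dominoSpace (d : Finset (ℤ × ℤ)) : Set (ℝ × ℝ) := ⋃ s ∈ d, unitSq s

/-- The edge `(x, y)` belongs to the tiling `T` : its segment is not contained in the
interior of a domino of `T`. -/
def EdgeInTiling (R : Finset (ℤ × ℤ)) (T : Finset (Finset (ℤ × ℤ))) (x y : ℤ × ℤ) : Prop :=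
  DirectedEdge R x y ∧
    ¬ ∃ d ∈ T, segment ℝ (embPt x) (embPt y) ⊆ interior (dominoSpace d)

/-- The unit square adjacent to the directed edge `(x, y)` on its left. -/
def leftSq (x y : ℤ × ℤ) : ℤ × ℤ :=
  if y = (x.1 + 1, x.2) then (x.1, x.2)
  else if y = (x.1 - 1, x.2) then (x.1 - 1, x.2 - 1)
  else if y = (x.1, x.2 + 1) then (x.1 - 1, x.2)
  else (x.1, x.2 - 1)

/-- `h` is a height function of the tiling `T` of `R`. -/
def IsHeightFunction (R : Finset (ℤ × ℤ)) (T : Finset (Finset (ℤ × ℤ)))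
    (h : ℤ × ℤ → ℤ) : Prop :=
  ∀ x y : ℤ × ℤ, EdgeInTiling R T x y → White (leftSq x y) → h x - h y = 1

/-- `S` is a forcing set of the tiling `T` of `R`. -/
def IsForcingSet (R : Finset (ℤ × ℤ)) (T S : Finset (Finset (ℤ × ℤ))) : Prop :=
  S ⊆ T ∧ ∀ T', IsDominoTiling R T' → S ⊆ T' → T' = T

/-- The forcing number of `R`. -/
noncomputable def forcingNumber (R : Finset (ℤ × ℤ)) : ℕ :=
  sInf {n | ∃ T S, IsDominoTiling R T ∧ IsForcingSet R T S ∧ S.card = n}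

/-- The function `α`. -/
def alpha (x y : ℤ × ℤ) : ℤ :=
  if (Even (x.1 - x.2) ∧ y.2 - x.2 ≤ y.1 - x.1) ∨ (¬ Even (x.1 - x.2) ∧ y.1 - x.1 < y.2 - x.2)
  then 2 * max |y.1 - x.1| |y.2 - x.2| + ((y.1 - x.1) - (y.2 - x.2)) % 2
  else 2 * max |y.1 - x.1| |y.2 - x.2| - ((y.1 - x.1) - (y.2 - x.2)) % 2

/-- The Chebyshev norm on `ℤ × ℤ`. -/
def cheb (v : ℤ × ℤ) : ℤ := max |v.1| |v.2|

/-- A geodesic path in the square lattice. -/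
def IsGeodesicPath (n : ℕ) (f : Fin (n + 1) → ℤ × ℤ) : Prop :=
  ∀ i : Fin n, f i.castSucc ≠ f i.succ ∧
    (∃ s : ℤ × ℤ, f i.castSucc ∈ sqCorners s ∧ f i.succ ∈ sqCorners s) ∧
    cheb (f i.succ - f 0) = cheb (f i.castSucc - f 0) + 1

/-- `x ∼_R y` : some geodesic path from `x` to `y` has all of its points in `V R`. -/
def geoRel (R : Finset (ℤ × ℤ)) (x y : ℤ × ℤ) : Prop :=
  ∃ (n : ℕ) (f : Fin (n + 1) → ℤ × ℤ), IsGeodesicPath n f ∧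
    f 0 = x ∧ f (Fin.last n) = y ∧ ∀ i, f i ∈ V R

/-- The black squares of `R`. -/
def blackSquares (R : Finset (ℤ × ℤ)) : Finset (ℤ × ℤ) :=
  R.filter fun s => ¬ Even (s.1 + s.2)

/-- The set of white squares of `R` adjacent to at least one square of `U`. -/
noncomputable def nbhdSq (R U : Finset (ℤ × ℤ)) : Finset (ℤ × ℤ) :=
  @Finset.filter _ (fun w => Even (w.1 + w.2) ∧ ∃ b ∈ U, w - b ∈ unitSteps)
    (Classical.decPred _) R

/-- The excess `e(U) = |N(U)| - |U|`. -/
noncomputable def excess (R U : Finset (ℤ × ℤ)) : ℤ :=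
  ((nbhdSq R U).card : ℤ) - U.card

/-- The maximum excess of an ordering (given as a list) of the black squares. -/
noncomputable def maxExcess (R : Finset (ℤ × ℤ)) (l : List (ℤ × ℤ)) : ℤ :=
  sSup {z : ℤ | ∃ k, 1 ≤ k ∧ k ≤ l.length ∧ z = excess R (l.take k).toFinset}

/-- The minimum maximum excess of `R` over all orderings of its black squares. -/
noncomputable def minMaxExcess (R : Finset (ℤ × ℤ)) : ℤ :=
  sInf {z : ℤ | ∃ l : List (ℤ × ℤ), l.Nodup ∧ l.toFinset = blackSquares R ∧
    z = maxExcess R l}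

/-- The `2n × 2n` square region. -/
noncomputable def squareRegion (n : ℕ) : Finset (ℤ × ℤ) :=
  Finset.Icc ((0 : ℤ), (0 : ℤ)) ((2 * n - 1 : ℤ), (2 * n - 1 : ℤ))

/-- The square of side `2k` centered at `x` (as a set of unit squares). -/
noncomputable def centerSquare (x : ℤ × ℤ) (k : ℕ) : Finset (ℤ × ℤ) :=
  Finset.Icc ((x.1 - k, x.2 - k) : ℤ × ℤ) ((x.1 + k - 1, x.2 + k - 1) : ℤ × ℤ)

/-- Possible values at `x` of height functions of tilings of `R` normalized at `v₀`. -/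
def heightVals (R : Finset (ℤ × ℤ)) (v₀ x : ℤ × ℤ) : Set ℤ :=
  {m | ∃ T h, IsDominoTiling R T ∧ IsHeightFunction R T h ∧ h v₀ = 0 ∧ h x = m}

/-- `c(x)` : the side of the largest square centered at `x` whose removal keeps `R` tileable. -/
noncomputable def maxSquareSide (R : Finset (ℤ × ℤ)) (x : ℤ × ℤ) : ℕ :=
  sSup {m : ℕ | ∃ k : ℕ, m = 2 * k ∧ centerSquare x k ⊆ R ∧
    ∃ T, IsDominoTiling (R \ centerSquare x k) T}

/-! Every point of the path other than `x'` is an interior point of the region, so all lattice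
points within Chebyshev distance `1` of it lie in `V(R)`. By induction on `k = ‖y - x'‖∞`, every
`y ∈ V(R)` within distance `1` of some point `f j` of the path is joined to `x'` by a geodesic in
`V(R)`: coordinatewise one finds `d` with `‖d - x'‖∞ = k - 1`, `‖y - d‖∞ ≤ 1` and `d` within
distance `1` of a path point `f i`, `i ≠ 0`; then `d ∈ V(R)`, and `y` extends the geodesic to `d`. -/

section Chebyshev

lemma cheb_nonneg (v : ℤ × ℤ) : 0 ≤ cheb v :=
  le_max_of_le_left (abs_nonneg _)

lemma cheb_eq_zero {v : ℤ × ℤ} : cheb v = 0 ↔ v = 0 := by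
  obtain ⟨v1, v2⟩ := v
  simp only [cheb, Prod.mk_eq_zero, abs_eq_max_neg]
  omega

lemma cheb_sub_comm (u v : ℤ × ℤ) : cheb (u - v) = cheb (v - u) := by
  simp only [cheb, Prod.fst_sub, Prod.snd_sub, abs_sub_comm]

lemma cheb_sub_le_cheb_sub_add_cheb_sub (u v w : ℤ × ℤ) :
    cheb (u - w) ≤ cheb (u - v) + cheb (v - w) := by
  simp only [cheb, Prod.fst_sub, Prod.snd_sub, abs_eq_max_neg]
  omega

lemma cheb_le_one_of_mem_unitSteps {v : ℤ × ℤ} (hv : v ∈ unitSteps) : cheb v ≤ 1 := by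
  simp only [unitSteps, Set.mem_insert_iff, Set.mem_singleton_iff] at hv
  rcases hv with rfl | rfl | rfl | rfl <;> decide

/-- The three intervals `[c - 1, c + 1]`, `[a - 1, a + 1]` and `[1 - k, k - 1]` meet pairwise,
hence have a common point. -/
lemma Int.exists_abs_le_sub_one {a c k : ℤ} (hk : 1 ≤ k) (ha : |a| ≤ k) (hc : |c| ≤ k)
    (hca : |c - a| ≤ 2) :
    ∃ e, |e| ≤ k - 1 ∧ |e - a| ≤ 1 ∧ |c - e| ≤ 1 := by
  refine ⟨max (max (c - 1) (a - 1)) (1 - k), ?_, ?_, ?_⟩ <;>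
  · simp only [abs_eq_max_neg] at *
    omega

lemma exists_cheb_eq_sub_one {a c : ℤ × ℤ} (hc : 1 ≤ cheb c) (hac : cheb a ≤ cheb c)
    (hca : cheb (c - a) ≤ 2) :
    ∃ d, cheb d = cheb c - 1 ∧ cheb (d - a) ≤ 1 ∧ cheb (c - d) ≤ 1 := by
  simp only [cheb, Prod.fst_sub, Prod.snd_sub, max_le_iff] at hc hac hca ⊢
  obtain ⟨e1, he1, he1a, hce1⟩ :=
    Int.exists_abs_le_sub_one hc hac.1 (le_max_left _ _) hca.1
  obtain ⟨e2, he2, he2a, hce2⟩ :=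
    Int.exists_abs_le_sub_one hc hac.2 (le_max_right _ _) hca.2
  refine ⟨(e1, e2), le_antisymm (max_le he1 he2) ?_, ⟨he1a, he2a⟩, ⟨hce1, hce2⟩⟩
  rcases le_total |c.2| |c.1| with h | h
  · rw [max_eq_left h]
    exact le_max_of_le_left (by linarith [abs_sub_abs_le_abs_sub c.1 e1])
  · rw [max_eq_right h]
    exact le_max_of_le_right (by linarith [abs_sub_abs_le_abs_sub c.2 e2])

end Chebyshev

section Squares

lemma exists_mem_sqCorners_of_cheb_sub_le_one {p q : ℤ × ℤ} (h : cheb (q - p) ≤ 1) :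
    ∃ s, p ∈ sqCorners s ∧ q ∈ sqCorners s := by
  obtain ⟨p1, p2⟩ := p
  obtain ⟨q1, q2⟩ := q
  simp only [cheb, Prod.mk_sub_mk, abs_eq_max_neg] at h
  refine ⟨(min p1 q1, min p2 q2), ?_, ?_⟩ <;>
  · simp only [sqCorners, Set.mem_insert_iff, Set.mem_singleton_iff, Prod.mk.injEq]
    omega

lemma cheb_sub_le_one_of_mem_sqCorners {p q s : ℤ × ℤ} (hp : p ∈ sqCorners s)
    (hq : q ∈ sqCorners s) : cheb (q - p) ≤ 1 := by
  simp only [sqCorners, Set.mem_insert_iff, Set.mem_singleton_iff] at hp hq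
  simp only [cheb, Prod.fst_sub, Prod.snd_sub, abs_eq_max_neg]
  rcases hp with rfl | rfl | rfl | rfl <;> rcases hq with rfl | rfl | rfl | rfl <;>
    omega

lemma embPt_mem_unitSq {p s : ℤ × ℤ} (hp : p ∈ sqCorners s) : embPt p ∈ unitSq s := by
  simp only [sqCorners, Set.mem_insert_iff, Set.mem_singleton_iff] at hp
  rcases hp with rfl | rfl | rfl | rfl <;>
  · simp only [unitSq, embPt, Set.mem_prod, Set.mem_Icc]
    push_cast
    refine ⟨⟨?_, ?_⟩, ?_, ?_⟩ <;> linarith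

lemma unitSq_eq_closure (s : ℤ × ℤ) :
    unitSq s = closure (Set.Ioo (s.1 : ℝ) (s.1 + 1) ×ˢ Set.Ioo (s.2 : ℝ) (s.2 + 1)) := by
  rw [closure_prod_eq, closure_Ioo (by linarith), closure_Ioo (by linarith), unitSq]

lemma eq_of_mem_unitSq_of_mem_Ioo {s t : ℤ × ℤ} {z : ℝ × ℝ} (hs : z ∈ unitSq s)
    (ht : z ∈ Set.Ioo (t.1 : ℝ) (t.1 + 1) ×ˢ Set.Ioo (t.2 : ℝ) (t.2 + 1)) : s = t := by
  obtain ⟨⟨hs1, hs1'⟩, hs2, hs2'⟩ := hs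
  obtain ⟨⟨ht1, ht1'⟩, ht2, ht2'⟩ := ht
  have h1 : s.1 < t.1 + 1 := by exact_mod_cast hs1.trans_lt ht1'
  have h1' : t.1 < s.1 + 1 := by exact_mod_cast ht1.trans_le hs1'
  have h2 : s.2 < t.2 + 1 := by exact_mod_cast hs2.trans_lt ht2'
  have h2' : t.2 < s.2 + 1 := by exact_mod_cast ht2.trans_le hs2'
  exact Prod.ext (by omega) (by omega)

lemma isClosed_regionSpace (R : Finset (ℤ × ℤ)) : IsClosed (regionSpace R) :=
  isClosed_biUnion_finset fun _ _ => isClosed_Icc.prod isClosed_Icc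

/-- Near an interior point `embPt p` the region meets the open square of every square
cornered at `p`, and only that square of `R` can contain such points. -/
lemma mem_of_embPt_mem_interior {R : Finset (ℤ × ℤ)} {p s : ℤ × ℤ}
    (hint : embPt p ∈ interior (regionSpace R)) (hp : p ∈ sqCorners s) : s ∈ R := by
  have hcl := embPt_mem_unitSq hp
  rw [unitSq_eq_closure, mem_closure_iff_nhds] at hcl
  obtain ⟨z, hzR, hzs⟩ := hcl _ (interior_mem_nhds.mpr (mem_interior_iff_mem_nhds.mp hint))
  obtain ⟨t, htR, hzt⟩ := Set.mem_iUnion₂.mp (interior_subset hzR)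
  rwa [← eq_of_mem_unitSq_of_mem_Ioo hzt hzs]

lemma mem_V_of_not_mem_bdry {R : Finset (ℤ × ℤ)} {p q : ℤ × ℤ} (hp : p ∈ V R)
    (hb : p ∉ bdry R) (hq : cheb (q - p) ≤ 1) : q ∈ V R := by
  obtain ⟨s, hsR, hps⟩ := hp
  have hmem : embPt p ∈ regionSpace R := Set.mem_iUnion₂.mpr ⟨s, hsR, embPt_mem_unitSq hps⟩
  have hint : embPt p ∈ interior (regionSpace R) := by
    by_contra h
    refine hb ?_
    show embPt p ∈ frontier (regionSpace R)
    rw [(isClosed_regionSpace R).frontier_eq]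
    exact ⟨hmem, h⟩
  obtain ⟨t, hpt, hqt⟩ := exists_mem_sqCorners_of_cheb_sub_le_one hq
  exact ⟨t, mem_of_embPt_mem_interior hint hpt, hqt⟩

end Squares

section Geodesics

variable {n : ℕ} {f : Fin (n + 1) → ℤ × ℤ}

lemma IsGeodesicPath.cheb_sub_zero (hf : IsGeodesicPath n f) (i : Fin (n + 1)) :
    cheb (f i - f 0) = i := by
  induction i using Fin.induction with
  | zero => simp [cheb_eq_zero]
  | succ i ih => rw [(hf i).2.2, ih, Fin.val_succ, Fin.val_castSucc]; push_cast; rfl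

lemma IsGeodesicPath.cheb_sub_le_one (hf : IsGeodesicPath n f) {i j : Fin (n + 1)}
    (hij : (j : ℕ) = i + 1) : cheb (f j - f i) ≤ 1 := by
  obtain ⟨_, ⟨_, hs, hs'⟩, _⟩ := hf ⟨i, by omega⟩
  rw [show j = Fin.succ ⟨i, by omega⟩ from Fin.ext hij]
  exact cheb_sub_le_one_of_mem_sqCorners hs hs'

variable {R : Finset (ℤ × ℤ)} {x y z : ℤ × ℤ}

lemma geoRel_refl (hx : x ∈ V R) : geoRel R x x :=
  ⟨0, fun _ => x, fun i => i.elim0, rfl, rfl, fun _ => hx⟩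

lemma geoRel.snoc (h : geoRel R x z) (hy : y ∈ V R) (hyz : cheb (y - z) ≤ 1)
    (hdist : cheb (y - x) = cheb (z - x) + 1) : geoRel R x y := by
  obtain ⟨n, f, hf, rfl, rfl, hV⟩ := h
  have hyne : f (Fin.last n) ≠ y := by
    rintro rfl
    omega
  refine ⟨n + 1, Fin.snoc f y, fun i => ?_, by simp, by simp, fun i => ?_⟩
  · have h0 : (Fin.snoc f y : Fin (n + 2) → ℤ × ℤ) 0 = f 0 := by simp
    rw [h0]
    induction i using Fin.lastCases with
    | last =>
      simp only [Fin.succ_last, Fin.snoc_last, Fin.snoc_castSucc]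
      exact ⟨hyne, exists_mem_sqCorners_of_cheb_sub_le_one hyz, hdist⟩
    | cast i =>
      rw [Fin.succ_castSucc]
      simp only [Fin.snoc_castSucc]
      exact hf i
  · induction i using Fin.lastCases with
    | last => simp [hy]
    | cast i => simpa using hV i

/-- The point of `f` at distance `min j (k + 1)` from `f 0` is at most `2` away from `y`. -/
lemma IsGeodesicPath.exists_step_back (hf : IsGeodesicPath n f) {k : ℕ} (hk0 : 0 < k)
    {j : Fin (n + 1)} (hyj : cheb (y - f j) ≤ 1) (hk : cheb (y - f 0) = k + 1) :
    ∃ i ≠ 0, ∃ d, cheb (d - f i) ≤ 1 ∧ cheb (d - f 0) = k ∧ cheb (y - d) ≤ 1 := by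
  have hj := hf.cheb_sub_zero j
  have hj_le : (j : ℤ) ≤ k + 2 := by
    linarith [cheb_sub_le_cheb_sub_add_cheb_sub (f j) y (f 0), cheb_sub_comm (f j) y]
  set i : Fin (n + 1) := ⟨min j (k + 1), by omega⟩
  have hi0 : i ≠ 0 := by
    rw [Ne, Fin.ext_iff]
    show min (j : ℕ) (k + 1) ≠ 0
    have := cheb_sub_le_cheb_sub_add_cheb_sub y (f j) (f 0)
    omega
  have hji : cheb (f j - f i) ≤ 1 := by
    rcases le_or_gt (j : ℕ) (k + 1) with h | h
    · rw [show i = j from Fin.ext (min_eq_left h), sub_self, cheb_eq_zero.mpr rfl]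
      exact zero_le_one
    · exact hf.cheb_sub_le_one (show (j : ℕ) = min (j : ℕ) (k + 1) + 1 by omega)
  have hi : cheb (f i - f 0) = min (j : ℕ) (k + 1) := hf.cheb_sub_zero i
  push_cast at hi
  obtain ⟨d, hd, hdi, hyd⟩ := exists_cheb_eq_sub_one (a := f i - f 0) (c := y - f 0)
    (by omega) (by omega)
    (by rw [sub_sub_sub_cancel_right]; linarith [cheb_sub_le_cheb_sub_add_cheb_sub y (f j) (f i)])
  refine ⟨i, hi0, d + f 0, ?_, by rw [add_sub_cancel_right, hd, hk]; ring, ?_⟩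
  · convert hdi using 2
    abel
  · rwa [sub_add_eq_sub_sub, sub_right_comm]

lemma IsGeodesicPath.geoRel_of_cheb_sub_le_one (hf : IsGeodesicPath n f) (h0 : f 0 ∈ V R)
    (hnbhd : ∀ i ≠ 0, ∀ q, cheb (q - f i) ≤ 1 → q ∈ V R) (hy : y ∈ V R) (j : Fin (n + 1))
    (hyj : cheb (y - f j) ≤ 1) : geoRel R (f 0) y := by
  obtain ⟨k, hk⟩ : ∃ k : ℕ, cheb (y - f 0) = k :=
    ⟨_, (Int.toNat_of_nonneg (cheb_nonneg _)).symm⟩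
  induction k generalizing y j with
  | zero =>
    rw [Nat.cast_zero, cheb_eq_zero, sub_eq_zero] at hk
    rw [hk]
    exact geoRel_refl h0
  | succ k ih =>
    push_cast at hk
    rcases Nat.eq_zero_or_pos k with rfl | hk0
    · exact (geoRel_refl h0).snoc hy (by simp [hk]) (by simp [hk, cheb_eq_zero])
    obtain ⟨i, hi0, d, hdi, hd0, hyd⟩ := hf.exists_step_back hk0 hyj hk
    exact (ih (hnbhd i hi0 d hdi) i hdi hd0).snoc hy hyd (by rw [hd0, hk])

end Geodesics

theorem geodesic_path_to_neighbor_general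
    (R : Finset (ℤ × ℤ))
    (x y x' : ℤ × ℤ)
    (hedge : DirectedEdge R x y)
    (hpath : ∃ (n : ℕ) (f : Fin (n + 1) → ℤ × ℤ), IsGeodesicPath n f ∧
      f 0 = x' ∧ f (Fin.last n) = x ∧ (∀ i, f i ∈ V R) ∧
      ∀ i : Fin (n + 1), i ≠ 0 → f i ∉ bdry R) :
    geoRel R x' y := by
  obtain ⟨n, f, hf, rfl, rfl, hV, hbdry⟩ := hpath
  obtain ⟨-, hy, hstep, -⟩ := hedge
  exact hf.geoRel_of_cheb_sub_le_one (hV 0)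
    (fun i hi _ hq => mem_V_of_not_mem_bdry (hV i) (hbdry i hi) hq) hy (Fin.last n)
    (cheb_le_one_of_mem_unitSteps hstep)

/-- If there is a geodesic path from `x'` to `x` inside `V(R)` touching
`∂R` at most at `x'`, and `(x, y)` is a lattice edge of `R`, then there is a geodesic
path from `x'` to `y` inside `V(R)`. -/
theorem geodesic_path_to_neighbor
    (R : Finset (ℤ × ℤ)) (hne : R.Nonempty)
    (hsc : SimplyConnectedSpace (regionSpace R))
    (x y x' : ℤ × ℤ) (hx' : x' ∈ V R)
    (hedge : DirectedEdge R x y)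
    (hpath : ∃ (n : ℕ) (f : Fin (n + 1) → ℤ × ℤ), IsGeodesicPath n f ∧
      f 0 = x' ∧ f (Fin.last n) = x ∧ (∀ i, f i ∈ V R) ∧
      ∀ i : Fin (n + 1), i ≠ 0 → f i ∉ bdry R) :
    geoRel R x' y :=
  geodesic_path_to_neighbor_general R x y x' hedge hpath
end

section
/- Let R be a region in the square lattice admitting at least one domino tiling. Then the forcing number f(R) is bounded below by the minimum maximum excess of R taken over all orderings of the black squares of R. -/
/-!
Take a minimum forcing set `S` of a tiling `T` of `R`. The region `Q` left after removing the
dominoes of `S` has a unique tiling, and a region with a unique tiling always has a black square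
adjacent to no white square of the region other than its partner (else an alternating cycle
would give a second tiling). Peeling such squares off one at a time orders the black squares of
`Q` so that the first `k` have at most `k` neighbours in `Q`. Listing the black squares of the
dominoes of `S` afterwards, every initial segment gains at most the `|S|` white squares of those
dominoes as extra neighbours, so its excess is at most `|S| = f(R)`.
-/

open Function Set in
theorem Set.Finite.exists_nonempty_bijOn {α : Type*} {f : α → α} {s : Set α} (hs : s.Finite)
    (hne : s.Nonempty) (hf : MapsTo f s s) : ∃ t ⊆ s, t.Nonempty ∧ BijOn f t t := by
  obtain ⟨x, hx⟩ := hne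
  obtain ⟨a, b, hab, hfab⟩ :=
    Finite.exists_lt_map_eq_of_forall_mem (f := fun n => f^[n] x) (fun n => hf.iterate n hx) hs
  have hper : IsPeriodicPt f (b - a) (f^[a] x) := by
    rw [IsPeriodicPt, IsFixedPt, ← iterate_add_apply, Nat.sub_add_cancel hab.le]
    exact hfab.symm
  have hmaps : MapsTo f (s ∩ periodicPts f) (s ∩ periodicPts f) :=
    hf.inter_inter (bijOn_periodicPts f).mapsTo
  refine ⟨s ∩ periodicPts f, inter_subset_left,
    ⟨f^[a] x, hf.iterate a hx, mk_mem_periodicPts (Nat.sub_pos_of_lt hab) hper⟩, ?_⟩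
  exact ((hs.subset inter_subset_left).injOn_iff_bijOn_of_mapsTo hmaps).mp
    ((bijOn_periodicPts f).injOn.mono inter_subset_right)

lemma mem_unitSteps_iff {v : ℤ × ℤ} :
    v ∈ unitSteps ↔ v = (1, 0) ∨ v = (-1, 0) ∨ v = (0, 1) ∨ v = (0, -1) := by
  simp [unitSteps]

lemma neg_mem_unitSteps {v : ℤ × ℤ} (h : v ∈ unitSteps) : -v ∈ unitSteps := by
  rcases mem_unitSteps_iff.1 h with rfl | rfl | rfl | rfl <;> simp [mem_unitSteps_iff]

lemma sub_mem_unitSteps_comm {x y : ℤ × ℤ} (h : x - y ∈ unitSteps) :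
    y - x ∈ unitSteps := by
  simpa using neg_mem_unitSteps h

lemma ne_of_sub_mem_unitSteps {x y : ℤ × ℤ} (h : x - y ∈ unitSteps) : x ≠ y := by
  rintro rfl
  rcases mem_unitSteps_iff.1 h with h | h | h | h <;> simp [Prod.ext_iff] at h

lemma even_iff_not_even_of_sub_mem_unitSteps {x y : ℤ × ℤ} (h : x - y ∈ unitSteps) :
    Even (x.1 + x.2) ↔ ¬ Even (y.1 + y.2) := by
  have h1 : x.1 - y.1 = (x - y).1 := rfl
  have h2 : x.2 - y.2 = (x - y).2 := rfl
  rcases mem_unitSteps_iff.1 h with h | h | h | h <;> rw [h] at h1 h2 <;>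
    simp only [Int.even_iff] <;> omega

def whiteSquares (R : Finset (ℤ × ℤ)) : Finset (ℤ × ℤ) :=
  R.filter fun s => Even (s.1 + s.2)

lemma mem_blackSquares {R : Finset (ℤ × ℤ)} {s : ℤ × ℤ} :
    s ∈ blackSquares R ↔ s ∈ R ∧ ¬ Even (s.1 + s.2) :=
  Finset.mem_filter

lemma mem_whiteSquares {R : Finset (ℤ × ℤ)} {s : ℤ × ℤ} :
    s ∈ whiteSquares R ↔ s ∈ R ∧ Even (s.1 + s.2) :=
  Finset.mem_filter

lemma card_blackSquares_add_card_whiteSquares (R : Finset (ℤ × ℤ)) :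
    (blackSquares R).card + (whiteSquares R).card = R.card := by
  rw [add_comm]
  exact Finset.card_filter_add_card_filter_not _

lemma mem_nbhdSq {R U : Finset (ℤ × ℤ)} {x : ℤ × ℤ} :
    x ∈ nbhdSq R U ↔ x ∈ R ∧ Even (x.1 + x.2) ∧ ∃ b ∈ U, x - b ∈ unitSteps := by
  classical
  simp [nbhdSq]

@[simp]
lemma nbhdSq_empty (R : Finset (ℤ × ℤ)) : nbhdSq R ∅ = ∅ := by
  ext x
  simp [mem_nbhdSq]

lemma nbhdSq_subset_whiteSquares (R U : Finset (ℤ × ℤ)) : nbhdSq R U ⊆ whiteSquares R :=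
  fun _ hx => mem_whiteSquares.2 ⟨(mem_nbhdSq.1 hx).1, (mem_nbhdSq.1 hx).2.1⟩

lemma nbhdSq_subset_nbhdSq_sdiff_union (R D U : Finset (ℤ × ℤ)) :
    nbhdSq R U ⊆ nbhdSq (R \ D) U ∪ whiteSquares D := by
  intro x hx
  obtain ⟨hxR, hxw, hadj⟩ := mem_nbhdSq.1 hx
  by_cases hxD : x ∈ D
  · exact Finset.mem_union_right _ (mem_whiteSquares.2 ⟨hxD, hxw⟩)
  · exact Finset.mem_union_left _ (mem_nbhdSq.2 ⟨Finset.mem_sdiff.2 ⟨hxR, hxD⟩, hxw, hadj⟩)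

def IsBlackOrdering (R : Finset (ℤ × ℤ)) (l : List (ℤ × ℤ)) : Prop :=
  l.Nodup ∧ l.toFinset = blackSquares R

namespace IsBlackOrdering

variable {R R₁ R₂ : Finset (ℤ × ℤ)} {l l₁ l₂ : List (ℤ × ℤ)}

lemma mem (h : IsBlackOrdering R l) {a : ℤ × ℤ} (ha : a ∈ l) : a ∈ R :=
  (mem_blackSquares.1 (h.2 ▸ List.mem_toFinset.2 ha)).1

lemma length_eq (h : IsBlackOrdering R l) : l.length = (blackSquares R).card := by
  rw [← h.2, List.toFinset_card_of_nodup h.1]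

lemma append (h₁ : IsBlackOrdering R₁ l₁) (h₂ : IsBlackOrdering R₂ l₂) (hR : Disjoint R₁ R₂) :
    IsBlackOrdering (R₁ ∪ R₂) (l₁ ++ l₂) := by
  refine ⟨h₁.1.append h₂.1 fun a ha₁ ha₂ => Finset.disjoint_left.1 hR (h₁.mem ha₁) (h₂.mem ha₂),
    ?_⟩
  rw [List.toFinset_append, h₁.2, h₂.2, blackSquares, blackSquares, blackSquares,
    Finset.filter_union]

end IsBlackOrdering

lemma isBlackOrdering_toList (R : Finset (ℤ × ℤ)) :
    IsBlackOrdering R (blackSquares R).toList :=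
  ⟨Finset.nodup_toList _, Finset.toList_toFinset _⟩

lemma isBlackOrdering_pair {b w : ℤ × ℤ} (hb : ¬ Even (b.1 + b.2)) (hw : Even (w.1 + w.2)) :
    IsBlackOrdering {b, w} [b] := by
  refine ⟨List.nodup_singleton b, ?_⟩
  ext x
  simp only [List.toFinset_cons, List.toFinset_nil, insert_empty_eq, Finset.mem_singleton,
    mem_blackSquares, Finset.mem_insert]
  constructor
  · rintro rfl
    exact ⟨Or.inl rfl, hb⟩
  · rintro ⟨rfl | rfl, hx⟩
    · rfl
    · exact absurd hw hx

lemma isDomino_pair {s t : ℤ × ℤ} (h : t - s ∈ unitSteps) : IsDomino {s, t} := by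
  rcases mem_unitSteps_iff.1 h with h | h | h | h
  · exact ⟨s, t, rfl, Or.inl h⟩
  · refine ⟨t, s, Finset.pair_comm _ _, Or.inl ?_⟩
    rw [← neg_sub, h]; rfl
  · exact ⟨s, t, rfl, Or.inr h⟩
  · refine ⟨t, s, Finset.pair_comm _ _, Or.inr ?_⟩
    rw [← neg_sub, h]; rfl

lemma IsDomino.exists_eq_pair {d : Finset (ℤ × ℤ)} (hd : IsDomino d) {s : ℤ × ℤ}
    (hs : s ∈ d) :
    ∃ t, d = {s, t} ∧ t - s ∈ unitSteps := by
  obtain ⟨a, c, rfl, hac⟩ := hd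
  have hca : c - a ∈ unitSteps := by rcases hac with h | h <;> simp [h, mem_unitSteps_iff]
  rcases Finset.mem_insert.1 hs with rfl | hs
  · exact ⟨c, rfl, hca⟩
  · rw [Finset.mem_singleton.1 hs]
    exact ⟨a, Finset.pair_comm _ _, sub_mem_unitSteps_comm hca⟩

lemma IsDomino.card_eq_two {d : Finset (ℤ × ℤ)} (hd : IsDomino d) : d.card = 2 := by
  obtain ⟨a, c, rfl, hac⟩ := hd
  refine Finset.card_pair (ne_of_sub_mem_unitSteps (x := c) ?_).symm
  rcases hac with h | h <;> simp [h, mem_unitSteps_iff]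

section Tiling

variable {R : Finset (ℤ × ℤ)} {T S : Finset (Finset (ℤ × ℤ))}

lemma IsDominoTiling.eq_of_mem (hT : IsDominoTiling R T) {d d' : Finset (ℤ × ℤ)} (hd : d ∈ T)
    (hd' : d' ∈ T) {s : ℤ × ℤ} (hs : s ∈ d) (hs' : s ∈ d') : d = d' :=
  (hT.2 s ((hT.1 d hd).2 s hs)).unique ⟨hd, hs⟩ ⟨hd', hs'⟩

lemma IsDominoTiling.eq_of_pair_mem (hT : IsDominoTiling R T) {s t t' : ℤ × ℤ}
    (ht : {s, t} ∈ T) (ht' : {s, t'} ∈ T) (hst' : t' ≠ s) : t' = t := by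
  have ht'mem : t' ∈ ({s, t} : Finset (ℤ × ℤ)) := by
    rw [hT.eq_of_mem ht ht' (Finset.mem_insert_self s _) (Finset.mem_insert_self s _)]
    exact Finset.mem_insert_of_mem (Finset.mem_singleton_self t')
  simpa [hst'] using ht'mem

lemma IsDominoTiling.isForcingSet_self (hT : IsDominoTiling R T) : IsForcingSet R T T := by
  refine ⟨subset_rfl, fun T' hT' hsub => Finset.Subset.antisymm (fun d hd => ?_) hsub⟩
  obtain ⟨a, c, rfl, -⟩ := (hT'.1 d hd).1
  obtain ⟨d₀, ⟨hd₀, ha₀⟩, -⟩ := hT.2 a ((hT'.1 _ hd).2 a (by simp))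
  rwa [hT'.eq_of_mem hd (hsub hd₀) (by simp) ha₀]

lemma exists_forcingSet_card_eq_forcingNumber (htile : ∃ T, IsDominoTiling R T) :
    ∃ T S, IsDominoTiling R T ∧ IsForcingSet R T S ∧ S.card = forcingNumber R := by
  obtain ⟨T, hT⟩ := htile
  have hne : {n | ∃ T S, IsDominoTiling R T ∧ IsForcingSet R T S ∧ S.card = n}.Nonempty :=
    ⟨T.card, T, T, hT, hT.isForcingSet_self, rfl⟩
  exact Nat.sInf_mem hne

lemma IsDominoTiling.biUnion_subset (hT : IsDominoTiling R T) (hS : S ⊆ T) :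
    S.biUnion id ⊆ R := by
  intro s hs
  obtain ⟨d, hd, hsd⟩ := Finset.mem_biUnion.1 hs
  exact (hT.1 d (hS hd)).2 s hsd

lemma IsDominoTiling.card_biUnion (hT : IsDominoTiling R T) (hS : S ⊆ T) :
    (S.biUnion id).card = 2 * S.card := by
  rw [Finset.card_biUnion, Finset.sum_congr rfl fun d hd =>
      show (id d).card = 2 from (hT.1 d (hS hd)).1.card_eq_two,
    Finset.sum_const, smul_eq_mul, mul_comm]
  intro d hd d' hd' hne
  exact Finset.disjoint_left.2 fun s hs hs' => hne (hT.eq_of_mem (hS hd) (hS hd') hs hs')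

end Tiling

/-- A perfect matching of the squares of `Q`, encoded as an involution of `Q` (arbitrary off
`Q`); it corresponds to the tiling of `Q` by the dominoes `{s, m s}`. -/
def IsMatching (Q : Finset (ℤ × ℤ)) (m : ℤ × ℤ → ℤ × ℤ) : Prop :=
  ∀ s ∈ Q, m s ∈ Q ∧ m (m s) = s ∧ m s - s ∈ unitSteps

def IsUniqueMatching (Q : Finset (ℤ × ℤ)) (m : ℤ × ℤ → ℤ × ℤ) : Prop :=
  IsMatching Q m ∧ ∀ m', IsMatching Q m' → Set.EqOn m' m Q

namespace IsMatching

variable {Q D : Finset (ℤ × ℤ)} {m m' : ℤ × ℤ → ℤ × ℤ}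

lemma ne (hm : IsMatching Q m) {s : ℤ × ℤ} (hs : s ∈ Q) : m s ≠ s :=
  ne_of_sub_mem_unitSteps (hm s hs).2.2

lemma even_iff (hm : IsMatching Q m) {s : ℤ × ℤ} (hs : s ∈ Q) :
    Even ((m s).1 + (m s).2) ↔ ¬ Even (s.1 + s.2) :=
  even_iff_not_even_of_sub_mem_unitSteps (hm s hs).2.2

lemma card_blackSquares (hm : IsMatching Q m) :
    (blackSquares Q).card = (whiteSquares Q).card := by
  refine Finset.card_nbij' m m (fun s hs => ?_) (fun s hs => ?_)
    (fun s hs => (hm s (mem_blackSquares.1 hs).1).2.1)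
    (fun s hs => (hm s (mem_whiteSquares.1 hs).1).2.1)
  · obtain ⟨hsQ, hsb⟩ := mem_blackSquares.1 hs
    exact mem_whiteSquares.2 ⟨(hm s hsQ).1, (hm.even_iff hsQ).2 hsb⟩
  · obtain ⟨hsQ, hsw⟩ := mem_whiteSquares.1 hs
    exact mem_blackSquares.2 ⟨(hm s hsQ).1, fun h => (hm.even_iff hsQ).1 h hsw⟩

lemma isDominoTiling_image (hm : IsMatching Q m) :
    IsDominoTiling Q (Q.image fun s => {s, m s}) := by
  refine ⟨fun d hd => ?_,
    fun s hs => ⟨{s, m s}, ⟨Finset.mem_image_of_mem _ hs, Finset.mem_insert_self s _⟩, ?_⟩⟩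
  · obtain ⟨s, hs, rfl⟩ := Finset.mem_image.1 hd
    refine ⟨isDomino_pair (hm s hs).2.2, fun x hx => ?_⟩
    rcases Finset.mem_insert.1 hx with rfl | hx
    · exact hs
    · exact Finset.mem_singleton.1 hx ▸ (hm s hs).1
  · rintro d ⟨hd, hsd⟩
    obtain ⟨t, ht, rfl⟩ := Finset.mem_image.1 hd
    rcases Finset.mem_insert.1 hsd with rfl | hsd
    · rfl
    · rw [Finset.mem_singleton.1 hsd, (hm t ht).2.1, Finset.pair_comm]

lemma of_subset (hm : IsMatching Q m) (hDQ : D ⊆ Q) (hD : ∀ s ∈ D, m s ∈ D) :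
    IsMatching D m :=
  fun s hs => ⟨hD s hs, (hm s (hDQ hs)).2⟩

lemma sdiff (hm : IsMatching Q m) (hD : ∀ s ∈ D, m s ∈ D) : IsMatching (Q \ D) m := by
  intro s hs
  obtain ⟨hsQ, hsD⟩ := Finset.mem_sdiff.1 hs
  refine ⟨Finset.mem_sdiff.2 ⟨(hm s hsQ).1, fun h => hsD ?_⟩, (hm s hsQ).2⟩
  rw [← (hm s hsQ).2.1]
  exact hD _ h

lemma piecewise (hm : IsMatching D m) (hm' : IsMatching (Q \ D) m') (hDQ : D ⊆ Q) :
    IsMatching Q (D.piecewise m m') := by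
  intro s hs
  by_cases hsD : s ∈ D
  · obtain ⟨hmD, hmm, hadj⟩ := hm s hsD
    rw [Finset.piecewise_eq_of_mem _ _ _ hsD, Finset.piecewise_eq_of_mem _ _ _ hmD]
    exact ⟨hDQ hmD, hmm, hadj⟩
  · obtain ⟨hmQD, hmm, hadj⟩ := hm' s (Finset.mem_sdiff.2 ⟨hs, hsD⟩)
    obtain ⟨hmQ, hmD⟩ := Finset.mem_sdiff.1 hmQD
    rw [Finset.piecewise_eq_of_notMem _ _ _ hsD, Finset.piecewise_eq_of_notMem _ _ _ hmD]
    exact ⟨hmQ, hmm, hadj⟩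

/-- Switching `m` along the alternating cycles of the permutation `c ↦ m (w c)` of `C`. -/
lemma exists_eqOn_of_bijOn (hm : IsMatching Q m) {C : Set (ℤ × ℤ)}
    {w : ℤ × ℤ → ℤ × ℤ} (hCQ : C ⊆ Q) (hw : ∀ c ∈ C, w c ∈ Q ∧ w c - c ∈ unitSteps ∧ w c ∉ C)
    (hbij : Set.BijOn (m ∘ w) C C) : ∃ m', IsMatching Q m' ∧ Set.EqOn m' w C := by
  classical
  set g := Function.invFunOn (m ∘ w) C
  set m' := fun x => if x ∈ C then w x else if m x ∈ C then g (m x) else m x with hm'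
  refine ⟨m', fun s hs => ?_, fun c hc => if_pos hc⟩
  by_cases hsC : s ∈ C
  · obtain ⟨hwQ, hwadj, hwC⟩ := hw s hsC
    have hmw : m (w s) ∈ C := hbij.mapsTo hsC
    have hgs : g (m (w s)) = s := hbij.injOn.leftInvOn_invFunOn hsC
    have hm's : m' s = w s := if_pos hsC
    have hm'w : m' (w s) = s := by simp only [hm', if_neg hwC, if_pos hmw, hgs]
    rw [hm's, hm'w]
    exact ⟨hwQ, rfl, hwadj⟩
  by_cases hmsC : m s ∈ C
  · have hgC : g (m s) ∈ C := hbij.surjOn.mapsTo_invFunOn hmsC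
    obtain ⟨hwQ, hwadj, -⟩ := hw _ hgC
    have hwg : w (g (m s)) = s := by
      have h : m (w (g (m s))) = m s := hbij.surjOn.rightInvOn_invFunOn hmsC
      rw [← (hm _ hwQ).2.1, h, (hm s hs).2.1]
    have hm's : m' s = g (m s) := by simp only [hm', if_neg hsC, if_pos hmsC]
    have hm'g : m' (g (m s)) = s := by simp only [hm', if_pos hgC, hwg]
    rw [hm's, hm'g]
    refine ⟨hCQ hgC, rfl, sub_mem_unitSteps_comm ?_⟩
    rwa [hwg] at hwadj
  · have hmms : m (m s) ∉ C := by rwa [(hm s hs).2.1]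
    have hm's : m' s = m s := by simp only [hm', if_neg hsC, if_neg hmsC]
    have hm'm : m' (m s) = m (m s) := by simp only [hm', if_neg hmsC, if_neg hmms]
    rw [hm's, hm'm]
    exact hm s hs

end IsMatching

lemma IsDominoTiling.exists_isMatching {R : Finset (ℤ × ℤ)} {T : Finset (Finset (ℤ × ℤ))}
    (hT : IsDominoTiling R T) :
    ∃ m, IsMatching R m ∧ ∀ s ∈ R, ({s, m s} : Finset (ℤ × ℤ)) ∈ T := by
  have hpartner : ∀ s ∈ R, ∃ t, {s, t} ∈ T ∧ t - s ∈ unitSteps := by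
    intro s hs
    obtain ⟨d, ⟨hd, hsd⟩, -⟩ := hT.2 s hs
    obtain ⟨t, rfl, ht⟩ := (hT.1 d hd).1.exists_eq_pair hsd
    exact ⟨t, hd, ht⟩
  choose! m hmT hm using hpartner
  have hmR : ∀ s ∈ R, m s ∈ R := fun s hs => (hT.1 _ (hmT s hs)).2 _ (by simp)
  refine ⟨m, fun s hs => ⟨hmR s hs, ?_, hm s hs⟩, hmT⟩
  have hsym : ({m s, s} : Finset (ℤ × ℤ)) ∈ T := Finset.pair_comm s (m s) ▸ hmT s hs
  exact hT.eq_of_pair_mem hsym (hmT _ (hmR s hs)) (ne_of_sub_mem_unitSteps (hm _ (hmR s hs)))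

namespace IsUniqueMatching

variable {Q D : Finset (ℤ × ℤ)} {m : ℤ × ℤ → ℤ × ℤ}

lemma sdiff (hU : IsUniqueMatching Q m) (hDQ : D ⊆ Q) (hD : ∀ s ∈ D, m s ∈ D) :
    IsUniqueMatching (Q \ D) m := by
  refine ⟨hU.1.sdiff hD, fun m' hm' s hs => ?_⟩
  have h := hU.2 _ ((hU.1.of_subset hDQ hD).piecewise hm' hDQ) (Finset.sdiff_subset hs)
  rwa [Finset.piecewise_eq_of_notMem _ _ _ (Finset.mem_sdiff.1 hs).2] at h

/-- If every black square had a neighbour other than its partner, stepping to such a neighbour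
and on to its partner would eventually close an alternating cycle, along which the tiling could
be switched. -/
lemma exists_pendant (hU : IsUniqueMatching Q m) (hne : (blackSquares Q).Nonempty) :
    ∃ b ∈ blackSquares Q, ∀ x ∈ Q, x - b ∈ unitSteps → x = m b := by
  by_contra! h
  choose! w hwQ hwadj hwne using h
  have hwwhite : ∀ b ∈ blackSquares Q, Even ((w b).1 + (w b).2) := fun b hb =>
    (even_iff_not_even_of_sub_mem_unitSteps (hwadj b hb)).2 (mem_blackSquares.1 hb).2
  have hmaps : Set.MapsTo (m ∘ w) (blackSquares Q : Set (ℤ × ℤ)) (blackSquares Q) := by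
    intro b hb
    have hwb := hwQ b hb
    exact mem_blackSquares.2 ⟨(hU.1 _ hwb).1, fun h => (hU.1.even_iff hwb).1 h (hwwhite b hb)⟩
  obtain ⟨C, hCb, ⟨c, hc⟩, hbij⟩ :=
    (blackSquares Q).finite_toSet.exists_nonempty_bijOn (Finset.coe_nonempty.2 hne) hmaps
  have hCQ : C ⊆ Q := fun x hx => (mem_blackSquares.1 (hCb hx)).1
  obtain ⟨m', hm', hm'w⟩ := hU.1.exists_eqOn_of_bijOn hCQ (fun x hx =>
    ⟨hwQ x (hCb hx), hwadj x (hCb hx),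
      fun h => (mem_blackSquares.1 (hCb h)).2 (hwwhite x (hCb hx))⟩) hbij
  exact hwne c (hCb hc) ((hm'w hc).symm.trans (hU.2 m' hm' (hCQ hc)))

end IsUniqueMatching

lemma nbhdSq_insert_subset {Q U : Finset (ℤ × ℤ)} {b w : ℤ × ℤ} (hb : ¬ Even (b.1 + b.2))
    (hpend : ∀ x ∈ Q, x - b ∈ unitSteps → x = w) :
    nbhdSq Q (insert b U) ⊆ insert w (nbhdSq (Q \ {b, w}) U) := by
  intro x hx
  obtain ⟨hxQ, hxw, b', hb', hadj⟩ := mem_nbhdSq.1 hx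
  by_cases hxw' : x = w
  · exact hxw' ▸ Finset.mem_insert_self _ _
  rcases Finset.mem_insert.1 hb' with rfl | hb'
  · exact absurd (hpend x hxQ hadj) hxw'
  · have hxb : x ≠ b := by rintro rfl; exact hb hxw
    refine Finset.mem_insert_of_mem (mem_nbhdSq.2 ⟨?_, hxw, b', hb', hadj⟩)
    exact Finset.mem_sdiff.2 ⟨hxQ, by simp [hxb, hxw']⟩

theorem IsUniqueMatching.exists_ordering_card_nbhdSq_le {Q : Finset (ℤ × ℤ)}
    {m : ℤ × ℤ → ℤ × ℤ} (hU : IsUniqueMatching Q m) :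
    ∃ l, IsBlackOrdering Q l ∧ ∀ k ≤ l.length, (nbhdSq Q (l.take k).toFinset).card ≤ k := by
  induction Q using Finset.strongInduction with
  | H Q ih =>
    rcases (blackSquares Q).eq_empty_or_nonempty with hQ | hQ
    · refine ⟨[], ⟨List.nodup_nil, by simp [hQ]⟩, fun k hk => ?_⟩
      simp
    obtain ⟨b, hb, hpend⟩ := hU.exists_pendant hQ
    obtain ⟨hbQ, hbblack⟩ := mem_blackSquares.1 hb
    have hpair : ({b, m b} : Finset (ℤ × ℤ)) ⊆ Q :=
      Finset.insert_subset hbQ (by simpa using (hU.1 b hbQ).1)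
    have hpairm : ∀ s ∈ ({b, m b} : Finset (ℤ × ℤ)), m s ∈ ({b, m b} : Finset (ℤ × ℤ)) := by
      simp [(hU.1 b hbQ).2.1]
    obtain ⟨l, hl, hbound⟩ :=
      ih _ (Finset.sdiff_ssubset hpair (by simp)) (hU.sdiff hpair hpairm)
    have hbl : IsBlackOrdering Q ([b] ++ l) := by
      have h := (isBlackOrdering_pair hbblack ((hU.1.even_iff hbQ).2 hbblack)).append hl
        Finset.disjoint_sdiff
      rwa [Finset.union_sdiff_of_subset hpair] at h
    refine ⟨b :: l, hbl, fun k hk => ?_⟩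
    cases k with
    | zero => simp
    | succ j =>
      rw [List.take_succ_cons, List.toFinset_cons]
      calc _ ≤ (insert (m b) (nbhdSq (Q \ {b, m b}) (l.take j).toFinset)).card :=
            Finset.card_le_card (nbhdSq_insert_subset hbblack hpend)
        _ ≤ (nbhdSq (Q \ {b, m b}) (l.take j).toFinset).card + 1 := Finset.card_insert_le _ _
        _ ≤ j + 1 := by have := hbound j (by simpa using hk); omega

section ForcingSet

variable {R : Finset (ℤ × ℤ)} {T S : Finset (Finset (ℤ × ℤ))} {m : ℤ × ℤ → ℤ × ℤ}

lemma IsDominoTiling.eq_pair_of_mem (hT : IsDominoTiling R T)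
    (hmT : ∀ s ∈ R, ({s, m s} : Finset (ℤ × ℤ)) ∈ T) {d : Finset (ℤ × ℤ)} (hd : d ∈ T)
    {s : ℤ × ℤ} (hs : s ∈ d) :
    d = {s, m s} :=
  hT.eq_of_mem hd (hmT s ((hT.1 d hd).2 s hs)) hs (Finset.mem_insert_self s _)

lemma IsDominoTiling.apply_mem_biUnion (hT : IsDominoTiling R T)
    (hmT : ∀ s ∈ R, ({s, m s} : Finset (ℤ × ℤ)) ∈ T) (hS : S ⊆ T) {s : ℤ × ℤ}
    (hs : s ∈ S.biUnion id) : m s ∈ S.biUnion id := by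
  obtain ⟨d, hd, hsd⟩ := Finset.mem_biUnion.1 hs
  refine Finset.mem_biUnion.2 ⟨d, hd, ?_⟩
  rw [hT.eq_pair_of_mem hmT (hS hd) hsd]
  exact Finset.mem_insert_of_mem (Finset.mem_singleton_self _)

lemma IsDominoTiling.card_whiteSquares_biUnion (hT : IsDominoTiling R T)
    (hmT : ∀ s ∈ R, ({s, m s} : Finset (ℤ × ℤ)) ∈ T) (hm : IsMatching R m)
    (hS : S ⊆ T) :
    (whiteSquares (S.biUnion id)).card = S.card := by
  have hD : IsMatching (S.biUnion id) m :=
    hm.of_subset (hT.biUnion_subset hS) fun _ => hT.apply_mem_biUnion hmT hS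
  have h := card_blackSquares_add_card_whiteSquares (S.biUnion id)
  rw [hD.card_blackSquares, hT.card_biUnion hS] at h
  omega

lemma IsForcingSet.isUniqueMatching_sdiff (hS : IsForcingSet R T S)
    (hT : IsDominoTiling R T) (hmT : ∀ s ∈ R, ({s, m s} : Finset (ℤ × ℤ)) ∈ T)
    (hm : IsMatching R m) :
    IsUniqueMatching (R \ S.biUnion id) m := by
  set D := S.biUnion id
  have hDR : D ⊆ R := hT.biUnion_subset hS.1
  have hDm : ∀ s ∈ D, m s ∈ D := fun _ => hT.apply_mem_biUnion hmT hS.1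
  refine ⟨hm.sdiff hDm, fun m' hm' s hs => ?_⟩
  have hm'' : IsMatching R (D.piecewise m m') := (hm.of_subset hDR hDm).piecewise hm' hDR
  have hST : S ⊆ R.image fun s => {s, D.piecewise m m' s} := by
    intro d hd
    obtain ⟨a, c, hac, -⟩ := (hT.1 d (hS.1 hd)).1
    have had : a ∈ d := hac ▸ Finset.mem_insert_self a _
    have haD : a ∈ D := Finset.mem_biUnion.2 ⟨d, hd, had⟩
    refine Finset.mem_image.2 ⟨a, hDR haD, ?_⟩
    rw [Finset.piecewise_eq_of_mem _ _ _ haD, hT.eq_pair_of_mem hmT (hS.1 hd) had]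
  have hsT : {s, D.piecewise m m' s} ∈ T :=
    hS.2 _ hm''.isDominoTiling_image hST ▸ Finset.mem_image_of_mem _ (Finset.sdiff_subset hs)
  rw [Finset.piecewise_eq_of_notMem _ _ _ (Finset.mem_sdiff.1 hs).2] at hsT
  exact hT.eq_of_pair_mem (hmT s (Finset.sdiff_subset hs)) hsT (hm'.ne hs)

end ForcingSet

lemma excess_le_card_whiteSquares {R D U : Finset (ℤ × ℤ)}
    (h : (nbhdSq (R \ D) U).card ≤ U.card) : excess R U ≤ (whiteSquares D).card := by
  have := (Finset.card_le_card (nbhdSq_subset_nbhdSq_sdiff_union R D U)).trans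
    (Finset.card_union_le _ _)
  unfold excess
  omega

lemma card_nbhdSq_take_append_le {Q : Finset (ℤ × ℤ)} {l l' : List (ℤ × ℤ)}
    (hwhite : (whiteSquares Q).card ≤ l.length)
    (hl : ∀ k ≤ l.length, (nbhdSq Q (l.take k).toFinset).card ≤ k) (k : ℕ) :
    (nbhdSq Q ((l ++ l').take k).toFinset).card ≤ k := by
  rcases le_or_gt k l.length with hk | hk
  · rw [List.take_append_of_le_length hk]
    exact hl k hk
  · exact ((Finset.card_le_card (nbhdSq_subset_whiteSquares _ _)).trans hwhite).trans hk.le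

lemma maxExcess_le {R : Finset (ℤ × ℤ)} {l : List (ℤ × ℤ)} {c : ℤ} (hc : 0 ≤ c)
    (h : ∀ k ≤ l.length, excess R (l.take k).toFinset ≤ c) : maxExcess R l ≤ c := by
  rcases Set.eq_empty_or_nonempty
    {z : ℤ | ∃ k, 1 ≤ k ∧ k ≤ l.length ∧ z = excess R (l.take k).toFinset} with he | hne
  · rwa [maxExcess, he, Int.csSup_empty]
  · exact csSup_le hne fun _ ⟨k, _, hk, hz⟩ => hz ▸ h k hk

lemma minMaxExcess_le_maxExcess {R : Finset (ℤ × ℤ)} {l : List (ℤ × ℤ)}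
    (hl : IsBlackOrdering R l) : minMaxExcess R ≤ maxExcess R l := by
  refine csInf_le ?_ ⟨l, hl.1, hl.2, rfl⟩
  have hfin := ((blackSquares R).toList.permutations.map (maxExcess R)).toFinset.finite_toSet
  refine hfin.bddBelow.mono ?_
  rintro _ ⟨l', hnd', hl', rfl⟩
  simp only [Finset.mem_coe, List.mem_toFinset, List.mem_map, List.mem_permutations]
  exact ⟨l', List.perm_of_nodup_nodup_toFinset_eq hnd' (Finset.nodup_toList _) (by simp [hl']),
    rfl⟩

theorem minMaxExcess_le_forcingNumber_general
    (R : Finset (ℤ × ℤ))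
    (htile : ∃ T, IsDominoTiling R T) :
    minMaxExcess R ≤ (forcingNumber R : ℤ) := by
  obtain ⟨T, S, hT, hS, hcard⟩ := exists_forcingSet_card_eq_forcingNumber htile
  obtain ⟨m, hm, hmT⟩ := hT.exists_isMatching
  set D := S.biUnion id
  have hU : IsUniqueMatching (R \ D) m := hS.isUniqueMatching_sdiff hT hmT hm
  obtain ⟨lQ, hlQ, hboundQ⟩ := hU.exists_ordering_card_nbhdSq_le
  set l := lQ ++ (blackSquares D).toList
  have hl : IsBlackOrdering R l := by
    have h := hlQ.append (isBlackOrdering_toList D) Finset.sdiff_disjoint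
    rwa [Finset.sdiff_union_of_subset (hT.biUnion_subset hS.1)] at h
  have hwhite : (whiteSquares (R \ D)).card ≤ lQ.length := by
    rw [hlQ.length_eq, hU.1.card_blackSquares]
  calc minMaxExcess R ≤ maxExcess R l := minMaxExcess_le_maxExcess hl
    _ ≤ (whiteSquares D).card := maxExcess_le (Nat.cast_nonneg _) fun k hk => by
        refine excess_le_card_whiteSquares ?_
        rw [List.toFinset_card_of_nodup (hl.1.sublist (List.take_sublist _ _)), List.length_take,
          min_eq_left hk]
        exact card_nbhdSq_take_append_le hwhite hboundQ k
    _ = forcingNumber R := by rw [hT.card_whiteSquares_biUnion hmT hm hS.1, hcard]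

/-- Riddle. The forcing number is bounded below by the minimum
maximum excess. -/
theorem minMaxExcess_le_forcingNumber
    (R : Finset (ℤ × ℤ)) (hne : R.Nonempty)
    (htile : ∃ T, IsDominoTiling R T) :
    minMaxExcess R ≤ (forcingNumber R : ℤ) :=
  minMaxExcess_le_forcingNumber_general R htile
end

section
/- Let B and W be finite sets, let r ⊆ B × W be a relation, and for U ⊆ B write N(U) = {w ∈ W : (b,w) ∈ r for some b ∈ U}. Let S_B ⊆ B and S_W ⊆ W. If |N(V) \ S_W| ≥ |V| for every V ⊆ B with V ∩ S_B = ∅, then for every U ⊆ B one has |N(U)| − |U| ≥ |N(U ∩ S_B) ∩ S_W| − |U ∩ S_B|. -/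
/-- `N(U)` : the set of elements of `W` related to at least one element of `U`. -/
noncomputable def relNbhd {α β : Type*} (W : Finset β) (r : α → β → Prop)
    (U : Finset α) : Finset β :=
  @Finset.filter _ (fun w => ∃ b ∈ U, r b w) (Classical.decPred _) W

/-- If the part of the bipartite relation outside `S_B`, `S_W`
satisfies the Hall condition, then the excess of any `U ⊆ B` is at least the excess of
its restriction to `S_B` (measured inside `S_W`). -/
theorem excess_ge_restricted_excess {α β : Type*}
    [DecidableEq α] [DecidableEq β]
    (B : Finset α) (W : Finset β) (r : α → β → Prop)
    (hr : ∀ b w, r b w → b ∈ B ∧ w ∈ W)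
    (SB : Finset α) (SW : Finset β) (hSB : SB ⊆ B) (hSW : SW ⊆ W)
    (hHall : ∀ V ⊆ B, V ∩ SB = ∅ →
      (V.card : ℤ) ≤ ((relNbhd W r V) \ SW).card) :
    ∀ U ⊆ B,
      (((relNbhd W r (U ∩ SB)) ∩ SW).card : ℤ) - ((U ∩ SB).card : ℤ) ≤
        ((relNbhd W r U).card : ℤ) - (U.card : ℤ) := by
  intro U hU
  classical
  set A := (relNbhd W r (U ∩ SB)) ∩ SW with hA
  set C := (relNbhd W r (U \ SB)) \ SW with hC
  have hmono : ∀ V₁ V₂ : Finset α, V₁ ⊆ V₂ → relNbhd W r V₁ ⊆ relNbhd W r V₂ := by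
    intro V₁ V₂ hsub w hw
    simp only [relNbhd, Finset.mem_filter] at hw ⊢
    obtain ⟨hwW, b, hb, hrb⟩ := hw
    exact ⟨hwW, b, hsub hb, hrb⟩
  have hAC : A ∪ C ⊆ relNbhd W r U := by
    intro w hw
    rcases Finset.mem_union.1 hw with h | h
    · exact hmono _ _ Finset.inter_subset_left (Finset.mem_inter.1 h).1
    · exact hmono _ _ (Finset.sdiff_subset) (Finset.mem_sdiff.1 h).1
  have hdisj : Disjoint A C := by
    apply Finset.disjoint_left.2
    intro w hwA hwC
    exact (Finset.mem_sdiff.1 hwC).2 (Finset.mem_inter.1 hwA).2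
  have hcard : A.card + C.card ≤ (relNbhd W r U).card := by
    rw [← Finset.card_union_of_disjoint hdisj]
    exact Finset.card_le_card hAC
  have hHallC : ((U \ SB).card : ℤ) ≤ (C.card : ℤ) := by
    apply hHall
    · exact (Finset.sdiff_subset).trans hU
    · ext x; simp [Finset.mem_inter, Finset.mem_sdiff]
  have hsplit : (U ∩ SB).card + (U \ SB).card = U.card :=
    Finset.card_inter_add_card_sdiff U SB
  have : ((U ∩ SB).card : ℤ) + ((U \ SB).card : ℤ) = (U.card : ℤ) := by
    exact_mod_cast hsplit
  have hc : (A.card : ℤ) + (C.card : ℤ) ≤ ((relNbhd W r U).card : ℤ) := by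
    exact_mod_cast hcard
  linarith
end

section
/- The function α on ℤ² defined by the explicit formula below satisfies the triangle inequality: for all x, y, z ∈ ℤ², α(x,z) ≤ α(x,y) + α(y,z). -/
/-!
Writing `c(p) = (p.1 - p.2) mod 2` for the colour of a lattice point, `α(x, y)` is the largest of
the four differences `g y - g x` for the potentials `g = ±2 p.1 ± c(p)`, `±2 p.2 ∓ c(p)`: the
term `2 ‖y - x‖_∞` comes from whichever coordinate realises the sup norm, and the sign of `c`
in each potential is chosen so that `c(y) - c(x)` reproduces the correction `±δ`. A pointwise
maximum of potential differences satisfies the triangle inequality, one potential at a time.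
-/

theorem le_add_of_eq_sub_of_forall_sub_le {α ι G : Type*} [AddCommGroup G] [PartialOrder G]
    [IsOrderedAddMonoid G] {d : α → α → G} {f : ι → α → G}
    (hle : ∀ k x y, f k y - f k x ≤ d x y) {x y z : α} {k : ι} (hk : d x z = f k z - f k x) :
    d x z ≤ d x y + d y z :=
  calc d x z = (f k y - f k x) + (f k z - f k y) := by rw [hk]; abel
    _ ≤ d x y + d y z := add_le_add (hle k x y) (hle k y z)

def latticeParity (p : ℤ × ℤ) : ℤ := (p.1 - p.2) % 2

def alphaPotential : Fin 4 → ℤ × ℤ → ℤ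
  | 0, p => 2 * p.1 + latticeParity p
  | 1, p => -2 * p.1 - latticeParity p
  | 2, p => 2 * p.2 - latticeParity p
  | 3, p => -2 * p.2 + latticeParity p

lemma alphaPotential_sub_le_alpha (k : Fin 4) (x y : ℤ × ℤ) :
    alphaPotential k y - alphaPotential k x ≤ alpha x y := by
  fin_cases k <;> grind [alpha, alphaPotential, latticeParity]

lemma exists_alpha_eq_alphaPotential_sub (x y : ℤ × ℤ) :
    ∃ k, alpha x y = alphaPotential k y - alphaPotential k x := by
  rcases le_total |y.2 - x.2| |y.1 - x.1| with h | h
  · rcases abs_cases (y.1 - x.1) with ⟨hi, -⟩ | ⟨hi, -⟩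
    · exact ⟨0, by grind [alpha, alphaPotential, latticeParity]⟩
    · exact ⟨1, by grind [alpha, alphaPotential, latticeParity]⟩
  · rcases abs_cases (y.2 - x.2) with ⟨hj, -⟩ | ⟨hj, -⟩
    · exact ⟨2, by grind [alpha, alphaPotential, latticeParity]⟩
    · exact ⟨3, by grind [alpha, alphaPotential, latticeParity]⟩

/-- `α` satisfies the triangle inequality. -/
theorem alpha_triangle (x y z : ℤ × ℤ) :
    alpha x z ≤ alpha x y + alpha y z := by
  obtain ⟨k, hk⟩ := exists_alpha_eq_alphaPotential_sub x z
  exact le_add_of_eq_sub_of_forall_sub_le alphaPotential_sub_le_alpha hk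
end
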